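/- arXiv:2008.05719 — 6 statements merged into one kernel-verified Lean document; each statement's English description precedes it below -/
import Mathlib

section
/- Let A ↪ A' and B ↪ B' be injections of Noetherian local integral domains, with surjections α : A → B and α' : A' → B' forming a Cartesian (pullback) square, and suppose B' is the fraction field of B. Let 𝔭 = ker(α). Then A' is the localization A_𝔭 of A at 𝔭. -/
/-!
Since `α'` is a surjection out of a local ring onto a nonzero ring, it is a local
homomorphism. If `s ∉ ker α`, then `α' s = α s` is a nonzero element of the fraction field
`B'`, hence a unit, so `s` is already a unit of `A'`. Conversely, for `z : A'` write
`α' z = b / α s` with `s ∉ ker α`; then `α' (z s) = b` lies in `B`, so the Cartesian square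
gives `z s ∈ A`. Together with injectivity of `A → A'` these are the three axioms of the
localization `A_𝔭`.
-/

open RingHom

section CartesianSquare

variable {A A' B B' : Type*} [CommRing A] [CommRing A'] [CommRing B] [CommRing B']
  [Algebra A A'] [Algebra B B'] {α : A →+* B} {α' : A' →+* B'}

theorem isUnit_algebraMap_of_notMem_ker [IsDomain B] [IsFractionRing B B'] [IsLocalHom α']
    (hcomm : α'.comp (algebraMap A A') = (algebraMap B B').comp α) {s : A} (hs : s ∉ ker α) :
    IsUnit (algebraMap A A' s) := by
  have hαs : α s ∈ nonZeroDivisors B := mem_nonZeroDivisors_of_ne_zero hs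
  refine IsUnit.of_map α' _ ?_
  rw [← comp_apply, hcomm, comp_apply]
  exact IsLocalization.map_units B' ⟨α s, hαs⟩

theorem exists_mul_algebraMap_eq_algebraMap_of_notMem_ker [Nontrivial B]
    [IsLocalization (nonZeroDivisors B) B'] (hα : Function.Surjective α)
    (hcomm : α'.comp (algebraMap A A') = (algebraMap B B').comp α)
    (hlift : ∀ (a' : A') (b : B), α' a' = algebraMap B B' b → ∃ a : A, algebraMap A A' a = a')
    (z : A') : ∃ a s : A, s ∉ ker α ∧ z * algebraMap A A' s = algebraMap A A' a := by
  obtain ⟨⟨b, t, ht⟩, hbt⟩ := IsLocalization.surj (nonZeroDivisors B) (α' z)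
  obtain ⟨s, rfl⟩ := hα t
  have hs : s ∉ ker α := fun h ↦ zero_notMem_nonZeroDivisors (mem_ker.mp h ▸ ht)
  obtain ⟨a, ha⟩ := hlift (z * algebraMap A A' s) b (by
    rw [map_mul, ← comp_apply α', hcomm, comp_apply]
    exact hbt)
  exact ⟨a, s, hs, ha.symm⟩

end CartesianSquare

theorem cartesian_square_localization_at_prime_general
    (A A' B B' : Type*) [CommRing A] [CommRing A'] [CommRing B] [CommRing B']
    [IsDomain B] [IsLocalRing A']
    [Algebra A A'] [Algebra B B'] [IsFractionRing B B']
    (α : A →+* B) (α' : A' →+* B')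
    (hα : Function.Surjective α) (hα' : Function.Surjective α')
    (hinj : Function.Injective (algebraMap A A'))
    (hcomm : α'.comp (algebraMap A A') = (algebraMap B B').comp α)
    (hcart : ∀ (a' : A') (b : B), α' a' = algebraMap B B' b →
      ∃! a : A, algebraMap A A' a = a' ∧ α a = b)
    [hP : (RingHom.ker α).IsPrime] :
    IsLocalization (RingHom.ker α).primeCompl A' := by
  have : Nontrivial B' := IsFractionRing.nontrivial B B'
  have : IsLocalHom α' := .of_surjective α' hα'
  refine (isLocalization_iff _ _).mpr ⟨fun s ↦ ?_, fun z ↦ ?_, fun h ↦ ⟨1, by rw [hinj h]⟩⟩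
  · exact isUnit_algebraMap_of_notMem_ker hcomm s.2
  · obtain ⟨a, s, hs, h⟩ := exists_mul_algebraMap_eq_algebraMap_of_notMem_ker hα hcomm
      (fun a' b h ↦ (hcart a' b h).exists.imp fun _ ↦ And.left) z
    exact ⟨(a, ⟨s, hs⟩), h⟩

/-- Let `A ↪ A'` and `B ↪ B'` be injections of Noetherian local integral
domains, with surjections `α : A → B` and `α' : A' → B'` forming a Cartesian (pullback)
square, and suppose `B'` is the fraction field of `B`.  Let `𝔭 = ker α`.  Then `A'` is the
localization `A_𝔭` of `A` at `𝔭`. -/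
theorem cartesian_square_localization_at_prime
    (A A' B B' : Type*) [CommRing A] [CommRing A'] [CommRing B] [CommRing B']
    [IsDomain A] [IsDomain A'] [IsDomain B] [IsDomain B']
    [IsNoetherianRing A] [IsNoetherianRing A'] [IsNoetherianRing B] [IsNoetherianRing B']
    [IsLocalRing A] [IsLocalRing A'] [IsLocalRing B] [IsLocalRing B']
    [Algebra A A'] [Algebra B B'] [IsFractionRing B B']
    (α : A →+* B) (α' : A' →+* B')
    (hα : Function.Surjective α) (hα' : Function.Surjective α')
    (hinj : Function.Injective (algebraMap A A'))
    (hcomm : α'.comp (algebraMap A A') = (algebraMap B B').comp α)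
    (hcart : ∀ (a' : A') (b : B), α' a' = algebraMap B B' b →
      ∃! a : A, algebraMap A A' a = a' ∧ α a = b)
    [hP : (RingHom.ker α).IsPrime] :
    IsLocalization (RingHom.ker α).primeCompl A' :=
  cartesian_square_localization_at_prime_general A A' B B' α α' hα hα' hinj hcomm hcart (hP := hP)
end

section
/- Let G be the direct sum of a family of topological abelian groups {G_i}_{i ∈ I}, each carrying a subgroup topology (a topology generated by a family of open subgroups), and endow G with the direct sum topology. Then G is a coproduct in the category of topological abelian groups with subgroup topology: for any topological abelian group H with subgroup topology and any family of continuous homomorphisms f_i : G_i → H, there is a unique continuous homomorphism f : G → H with f|_{G_i} = f_i for all i. -/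
/-! The preimage of an open subgroup `S` of `H` under the induced map contains the basic
open subgroup `{x | ∀ i, x i ∈ (f i)⁻¹ S}` of the direct sum, since `S` is closed under the
finite sums `∑ i, f i (x i)`; uniqueness holds because the summands generate the direct sum. -/

open DirectSum

namespace DirectSum

variable {ι : Type*} [DecidableEq ι] {β : ι → Type*}

theorem toAddMonoid_mem [∀ i, AddCommMonoid (β i)] {γ S : Type*} [AddCommMonoid γ] [SetLike S γ]
    [AddSubmonoidClass S γ] (φ : ∀ i, β i →+ γ) (s : S) {x : ⨁ i, β i}
    (hx : ∀ i, φ i (x i) ∈ s) : toAddMonoid φ x ∈ s := by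
  classical
  rw [← sum_support_of x, map_sum]
  exact sum_mem fun i _ => (toAddMonoid_of φ i (x i)).symm ▸ hx i

theorem continuous_toAddMonoid [∀ i, AddCommGroup (β i)] [∀ i, TopologicalSpace (β i)]
    [TopologicalSpace (⨁ i, β i)] [IsTopologicalAddGroup (⨁ i, β i)]
    (hβ : (nhds (0 : ⨁ i, β i)).HasBasis
      (fun U : ∀ i, AddSubgroup (β i) => ∀ i, IsOpen ((U i : Set (β i))))
      (fun U : ∀ i, AddSubgroup (β i) => {x : ⨁ i, β i | ∀ i, x i ∈ U i}))
    {H : Type*} [AddCommGroup H] [TopologicalSpace H] [ContinuousAdd H]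
    (hH : (nhds (0 : H)).HasBasis (fun S : AddSubgroup H => IsOpen (S : Set H))
      (fun S : AddSubgroup H => (S : Set H)))
    (φ : ∀ i, β i →+ H) (hφ : ∀ i, Continuous (φ i)) : Continuous (toAddMonoid φ) := by
  refine continuous_of_continuousAt_zero _ ?_
  rw [ContinuousAt, map_zero, hβ.tendsto_iff hH]
  exact fun S hS => ⟨fun i => S.comap (φ i), fun i => hS.preimage (hφ i),
    fun x hx => toAddMonoid_mem φ S hx⟩

end DirectSum

theorem directSum_is_coproduct_of_subgroup_topologies_general
    {I : Type*} [DecidableEq I] (G : I → Type*) [∀ i, AddCommGroup (G i)]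
    [∀ i, TopologicalSpace (G i)]
    -- the direct sum carries the direct sum topology: the subgroups
    -- `{x | ∀ i, x i ∈ U i}` with each `U i` an open subgroup form a basis of `𝓝 0`
    [TopologicalSpace (⨁ i, G i)] [IsTopologicalAddGroup (⨁ i, G i)]
    (hDS : (nhds (0 : ⨁ i, G i)).HasBasis
      (fun U : ∀ i, AddSubgroup (G i) => ∀ i, IsOpen ((U i : Set (G i))))
      (fun U : ∀ i, AddSubgroup (G i) => {x : ⨁ i, G i | ∀ i, x i ∈ U i}))
    -- a target topological abelian group with subgroup topology
    {H : Type*} [AddCommGroup H] [TopologicalSpace H] [IsTopologicalAddGroup H]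
    (hH : (nhds (0 : H)).HasBasis (fun S : AddSubgroup H => IsOpen (S : Set H))
      (fun S : AddSubgroup H => (S : Set H)))
    (f : ∀ i, G i →+ H) (hf : ∀ i, Continuous (f i)) :
    ∃! F : (⨁ i, G i) →+ H, Continuous F ∧
      ∀ (i : I) (x : G i), F (DirectSum.of G i x) = f i x :=
  ⟨toAddMonoid f, ⟨continuous_toAddMonoid hDS hH f hf, toAddMonoid_of f⟩,
    fun F ⟨_, hF⟩ => addHom_ext fun i x => by rw [hF, toAddMonoid_of]⟩

/-- Let `G = ⨁ i, G i` be the direct sum of a family of topological abelian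
groups, each carrying a subgroup topology, and endow `G` with the direct sum topology
(generated by the open subgroups `⨁ i, U i` where each `U i` is an open subgroup of `G i`).
Then `G` is a coproduct in the category of topological abelian groups with subgroup
topology: for any topological abelian group `H` with subgroup topology and any family of
continuous homomorphisms `f i : G i → H`, there is a unique continuous homomorphism
`f : G → H` with `f ∘ (inclusion of G i) = f i` for all `i`. -/
theorem directSum_is_coproduct_of_subgroup_topologies
    {I : Type*} [DecidableEq I] (G : I → Type*) [∀ i, AddCommGroup (G i)]
    [∀ i, TopologicalSpace (G i)] [∀ i, IsTopologicalAddGroup (G i)]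
    -- each `G i` has the subgroup topology
    (hG : ∀ i, (nhds (0 : G i)).HasBasis
      (fun S : AddSubgroup (G i) => IsOpen (S : Set (G i)))
      (fun S : AddSubgroup (G i) => (S : Set (G i))))
    -- the direct sum carries the direct sum topology: the subgroups
    -- `{x | ∀ i, x i ∈ U i}` with each `U i` an open subgroup form a basis of `𝓝 0`
    [TopologicalSpace (⨁ i, G i)] [IsTopologicalAddGroup (⨁ i, G i)]
    (hDS : (nhds (0 : ⨁ i, G i)).HasBasis
      (fun U : ∀ i, AddSubgroup (G i) => ∀ i, IsOpen ((U i : Set (G i))))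
      (fun U : ∀ i, AddSubgroup (G i) => {x : ⨁ i, G i | ∀ i, x i ∈ U i}))
    -- a target topological abelian group with subgroup topology
    {H : Type*} [AddCommGroup H] [TopologicalSpace H] [IsTopologicalAddGroup H]
    (hH : (nhds (0 : H)).HasBasis (fun S : AddSubgroup H => IsOpen (S : Set H))
      (fun S : AddSubgroup H => (S : Set H)))
    (f : ∀ i, G i →+ H) (hf : ∀ i, Continuous (f i)) :
    ∃! F : (⨁ i, G i) →+ H, Continuous F ∧
      ∀ (i : I) (x : G i), F (DirectSum.of G i x) = f i x :=
  directSum_is_coproduct_of_subgroup_topologies_general G hDS hH f hf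
end

section
/- Let K be a Henselian discrete valuation field, let m ≥ 0 and n ≥ 1 be integers. Then there are inclusions of subgroups of the Milnor K-group: U_{m+1}K^M_n(K) ⊆ U'_m K^M_n(K) ⊆ U_m K^M_n(K). -/
/-- The subgroup of relations defining Milnor K-theory: multilinearity and the
Steinberg relation. -/
def MilnorRel (K : Type*) [Field K] (n : ℕ) :
    AddSubgroup (FreeAbelianGroup (Fin n → Kˣ)) :=
  AddSubgroup.closure
    ({z | ∃ (x : Fin n → Kˣ) (i : Fin n) (a b : Kˣ),
        z = FreeAbelianGroup.of (Function.update x i (a * b)) -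
            FreeAbelianGroup.of (Function.update x i a) -
            FreeAbelianGroup.of (Function.update x i b)} ∪
     {z | ∃ (x : Fin n → Kˣ) (i j : Fin n), i ≠ j ∧ ((x i : K) + (x j : K) = 1) ∧
        z = FreeAbelianGroup.of x})

/-- The `n`-th Milnor K-group `K^M_n(K)` of a field `K`. -/
def MilnorK (K : Type*) [Field K] (n : ℕ) : Type _ :=
  FreeAbelianGroup (Fin n → Kˣ) ⧸ MilnorRel K n

noncomputable instance (K : Type*) [Field K] (n : ℕ) : AddCommGroup (MilnorK K n) :=
  inferInstanceAs (AddCommGroup (FreeAbelianGroup (Fin n → Kˣ) ⧸ MilnorRel K n))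

/-- The Milnor symbol `{x 0, …, x (n-1)}` in `K^M_n(K)`. -/
def MilnorK.symbol {K : Type*} [Field K] {n : ℕ} (x : Fin n → Kˣ) : MilnorK K n :=
  QuotientAddGroup.mk (FreeAbelianGroup.of x)

section DVR

variable (A : Type*) [CommRing A] [IsDomain A] [IsDiscreteValuationRing A]
variable (K : Type*) [Field K] [Algebra A K] [IsFractionRing A K]

/-- The unit group `O_K^× ⊆ K^×` of the valuation ring. -/
noncomputable def unitGroup : Subgroup Kˣ :=
  (Units.map (algebraMap A K : A →* K)).range

/-- The higher unit group `U_m(K) = 1 + 𝔪_K^m` (with `U_0(K) = O_K^×`), as a subgroup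
of `K^×` (it is the subgroup generated — indeed, consisting — of the units `v` of `O_K`
with `v - 1 ∈ 𝔪_K^m`). -/
noncomputable def Um (m : ℕ) : Subgroup Kˣ :=
  Subgroup.closure {u : Kˣ | ∃ v : Aˣ, algebraMap A K (v : A) = (u : K) ∧
    ((v : A) - 1) ∈ (IsLocalRing.maximalIdeal A) ^ m}

/-- `U_m K^M_{n+1}(K) = {U_m(K), K^×, …, K^×}`. -/
noncomputable def UmKM (m n : ℕ) : AddSubgroup (MilnorK K (n + 1)) :=
  AddSubgroup.closure
    {z | ∃ x : Fin (n + 1) → Kˣ, x 0 ∈ Um A K m ∧ z = MilnorK.symbol x}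

/-- `U'_m K^M_{n+1}(K) = {U_m(K), O_K^×, …, O_K^×}`. -/
noncomputable def UmKM' (m n : ℕ) : AddSubgroup (MilnorK K (n + 1)) :=
  AddSubgroup.closure
    {z | ∃ x : Fin (n + 1) → Kˣ, x 0 ∈ Um A K m ∧
      (∀ i : Fin (n + 1), i ≠ 0 → x i ∈ unitGroup A K) ∧ z = MilnorK.symbol x}

end DVR

/-!
Since `Kˣ` is generated by `O_Kˣ` and any uniformizer, multilinearity reduces a symbol
`{u, y₁, …, yₙ}` with `u ∈ U_{m+1}(K)` to symbols whose entries `yⱼ` are units or `ϖ`. If all are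
units, the symbol is a generator of `U'_m`. Otherwise, with one entry fixed to `ϖ`, reduce the other
entries using the generator `-ϖ` instead: `{ϖ, -ϖ} = 0` kills every symbol containing `-ϖ`. For the
remaining `{1 + ϖ t, ϖ, units}` with `t ∈ 𝔪^m`, the Steinberg relation `{1 + ϖ t, -ϖ t} = 0`
trades `ϖ` for `t`, and `{1 + ϖ t, t}` is split further along
`1 + ϖ t = (1 + ϖ t) / (1 + t) · (1 + t)`.
-/

open Function IsLocalRing

namespace MilnorK

variable {K : Type*} [Field K] {n : ℕ}

theorem symbol_update_mul (x : Fin n → Kˣ) (i : Fin n) (a b : Kˣ) :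
    symbol (update x i (a * b)) = symbol (update x i a) + symbol (update x i b) := by
  have h : FreeAbelianGroup.of (update x i (a * b)) - FreeAbelianGroup.of (update x i a) -
      FreeAbelianGroup.of (update x i b) ∈ MilnorRel K n :=
    AddSubgroup.subset_closure (Or.inl ⟨x, i, a, b, rfl⟩)
  rw [← QuotientAddGroup.eq_zero_iff, QuotientAddGroup.mk_sub, QuotientAddGroup.mk_sub, sub_sub,
    sub_eq_zero] at h
  exact h

theorem symbol_eq_zero_of_add_eq_one (x : Fin n → Kˣ) {i j : Fin n} (hij : i ≠ j)
    (h : (x i : K) + x j = 1) : symbol x = 0 :=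
  (QuotientAddGroup.eq_zero_iff _).2 (AddSubgroup.subset_closure (Or.inr ⟨x, i, j, hij, h, rfl⟩))

theorem symbol_update_one (x : Fin n → Kˣ) (i : Fin n) : symbol (update x i 1) = 0 := by
  simpa using symbol_update_mul x i 1 1

theorem symbol_eq_zero_of_eq_one (x : Fin n → Kˣ) {i : Fin n} (h : x i = 1) : symbol x = 0 := by
  rw [← update_eq_self i x, h, symbol_update_one]

theorem symbol_update_inv (x : Fin n → Kˣ) (i : Fin n) (a : Kˣ) :
    symbol (update x i a⁻¹) = -symbol (update x i a) := by
  rw [eq_neg_iff_add_eq_zero, add_comm, ← symbol_update_mul, mul_inv_cancel, symbol_update_one]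

/-- Uses `-a = (1 - a) / (1 - a⁻¹)`. -/
theorem symbol_eq_zero_of_eq_neg (x : Fin n → Kˣ) {i j : Fin n} (hij : i ≠ j)
    (h : (x j : K) = -x i) : symbol x = 0 := by
  set a := x i
  by_cases ha : a = 1
  · exact symbol_eq_zero_of_eq_one x ha
  have ha' : (a : K) ≠ 1 := fun h => ha (Units.ext h)
  have hP : (1 : K) - a ≠ 0 := sub_ne_zero.2 ha'.symm
  have hQ : (1 : K) - (a : K)⁻¹ ≠ 0 := sub_ne_zero.2 fun h => ha' (inv_eq_one.1 h.symm)
  have hxj : x j = Units.mk0 _ hP * (Units.mk0 _ hQ)⁻¹ := by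
    apply Units.ext
    rw [h, Units.val_mul, Units.val_inv_eq_inv_val, Units.val_mk0, Units.val_mk0, ← div_eq_mul_inv,
      eq_div_iff hQ]
    field_simp
    ring
  have hsteinberg : symbol (update x j (Units.mk0 _ hP)) = 0 :=
    symbol_eq_zero_of_add_eq_one _ hij (by simp [update_of_ne hij, a])
  have hsteinberg' : symbol (update x j (Units.mk0 _ hQ)) = 0 := by
    set y := update x j (Units.mk0 _ hQ)
    have hyi : y i = a⁻¹⁻¹ := by simp [y, update_of_ne hij, a]
    rw [← update_eq_self i y, hyi, symbol_update_inv, neg_eq_zero]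
    exact symbol_eq_zero_of_add_eq_one _ hij (by simp [y, update_of_ne hij.symm])
  rw [← update_eq_self j x, hxj, symbol_update_mul, symbol_update_inv, hsteinberg, hsteinberg',
    neg_zero, add_zero]

theorem symbol_update_mem_of_mem_closure (S : AddSubgroup (MilnorK K n)) (x : Fin n → Kˣ)
    (i : Fin n) {T : Set Kˣ} (hT : ∀ b ∈ T, symbol (update x i b) ∈ S) {a : Kˣ}
    (ha : a ∈ Subgroup.closure T) : symbol (update x i a) ∈ S := by
  induction ha using Subgroup.closure_induction with
  | mem b hb => exact hT b hb
  | one => rw [symbol_update_one]; exact zero_mem S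
  | mul a b _ _ ha hb => rw [symbol_update_mul]; exact add_mem ha hb
  | inv a _ ha => rw [symbol_update_inv]; exact neg_mem ha

theorem symbol_mem_of_forall_mem_closure (S : AddSubgroup (MilnorK K n)) {T : Set Kˣ}
    (hT : Subgroup.closure T = ⊤) (s : Finset (Fin n)) (x : Fin n → Kˣ)
    (h : ∀ y : Fin n → Kˣ, (∀ i ∉ s, y i = x i) → (∀ i ∈ s, y i ∈ T) → symbol y ∈ S) :
    symbol x ∈ S := by
  induction s using Finset.induction_on generalizing x with
  | empty => exact h x (fun _ _ => rfl) (by simp)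
  | insert a s has ih =>
    rw [← update_eq_self a x]
    refine symbol_update_mem_of_mem_closure S x a (fun b hb => ih _ fun y hys hyT => h y ?_ ?_)
      (hT ▸ Subgroup.mem_top _)
    · intro i hi
      rw [Finset.mem_insert, not_or] at hi
      rw [hys i hi.2, update_of_ne hi.1]
    · intro i hi
      rcases Finset.mem_insert.1 hi with rfl | hi
      · rw [hys i has, update_self]; exact hb
      · exact hyT i hi

end MilnorK

section UnitFiltration

variable {A : Type*} [CommRing A] {K : Type*} [Field K] [Algebra A K]

theorem mem_unitGroup_of_eq {u : Kˣ} (c : Aˣ) (h : algebraMap A K c = u) : u ∈ unitGroup A K :=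
  ⟨c, Units.ext h⟩

variable [IsDomain A] [IsDiscreteValuationRing A]

theorem exists_eq_mul_of_mem_maximalIdeal_pow_succ {ϖ a : A} (hϖ : Irreducible ϖ) {m : ℕ}
    (ha : a ∈ maximalIdeal A ^ (m + 1)) : ∃ t ∈ maximalIdeal A ^ m, a = ϖ * t := by
  rw [(IsDiscreteValuationRing.irreducible_iff_uniformizer ϖ).1 hϖ, Ideal.span_singleton_pow]
    at ha ⊢
  obtain ⟨b, rfl⟩ := Ideal.mem_span_singleton'.1 ha
  exact ⟨b * ϖ ^ m, Ideal.mem_span_singleton'.2 ⟨b, rfl⟩, by ring⟩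

theorem mem_Um_of_eq {m : ℕ} {u : Kˣ} (v : Aˣ) (h : algebraMap A K v = u)
    (hv : (v : A) - 1 ∈ maximalIdeal A ^ m) : u ∈ Um A K m :=
  Subgroup.subset_closure ⟨v, h, hv⟩

open MilnorK

variable {m n : ℕ}

theorem symbol_mem_UmKM' {z : Fin (n + 1) → Kˣ} (h0 : z 0 ∈ Um A K m)
    (hz : ∀ j ≠ 0, z j ∈ unitGroup A K) : symbol z ∈ UmKM' A K m n :=
  AddSubgroup.subset_closure ⟨z, h0, hz, rfl⟩

/-- By the Steinberg relation `{v, 1 - v} = 0`, this symbol equals the generator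
`{v, c, units}`. -/
theorem symbol_mem_UmKM'_of_eq_one_sub_mul {z : Fin (n + 1) → Kˣ} {i : Fin (n + 1)}
    (hi : i ≠ 0) (hz : ∀ j ≠ i, j ≠ 0 → z j ∈ unitGroup A K) {v c : Aˣ}
    (hv : (v : A) - 1 ∈ maximalIdeal A ^ m) (hz0 : (z 0 : K) = algebraMap A K v)
    (hzi : (z i : K) = algebraMap A K ((1 - v) * c)) :
    symbol z ∈ UmKM' A K m n := by
  have hd : (1 : K) - z 0 ≠ 0 := by
    intro h
    apply (z i).ne_zero
    rw [hzi, map_mul, map_sub, map_one, ← hz0, h, zero_mul]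
  have hsplit : z i = Units.mk0 _ hd * Units.map (algebraMap A K : A →* K) c :=
    Units.ext (by simp [hzi, hz0])
  rw [← update_eq_self i z, hsplit, symbol_update_mul,
    symbol_eq_zero_of_add_eq_one _ hi.symm (by simp [update_of_ne hi.symm]), zero_add]
  exact symbol_mem_UmKM' (by rw [update_of_ne hi.symm]; exact mem_Um_of_eq v hz0.symm hv)
    ((forall_update_iff z fun j u => j ≠ 0 → u ∈ unitGroup A K).2 ⟨fun _ => ⟨c, rfl⟩, hz⟩)

/-- For `t ∈ 𝔪`, split `v = 1 + ϖ t` as `w e` with `e = 1 + t` and `w = v / e`; then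
`t = (1 - e)(-1) = (1 - w) e (1 - ϖ)⁻¹`, and both `{w, t}` and `{e, t}` are of the previous
form. -/
theorem symbol_mem_UmKM'_of_eq_one_add_uniformizer_mul {z : Fin (n + 1) → Kˣ}
    {i : Fin (n + 1)} (hi : i ≠ 0) (hz : ∀ j ≠ i, j ≠ 0 → z j ∈ unitGroup A K) {ϖ t : A}
    (hϖ : Irreducible ϖ) (ht : t ∈ maximalIdeal A ^ m) {v : Aˣ} (hv : (v : A) = 1 + ϖ * t)
    (hz0 : (z 0 : K) = algebraMap A K v) (hzi : (z i : K) = algebraMap A K t) :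
    symbol z ∈ UmKM' A K m n := by
  by_cases htu : IsUnit t
  · refine symbol_mem_UmKM' (mem_Um_of_eq v hz0.symm ?_) fun j hj0 => ?_
    · rw [hv, add_sub_cancel_left]
      exact Ideal.mul_mem_left _ _ ht
    · rcases eq_or_ne j i with rfl | hji
      exacts [mem_unitGroup_of_eq htu.unit hzi.symm, hz j hji hj0]
  have he : IsUnit (1 + t) := by
    simpa using isUnit_one_sub_self_of_mem_nonunits (-t) (by simpa using htu)
  have hd : IsUnit (1 - ϖ) := isUnit_one_sub_self_of_mem_nonunits ϖ hϖ.not_isUnit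
  set e := he.unit
  set d := hd.unit
  have hee : (e : A) * ↑e⁻¹ = 1 := e.mul_inv
  have hdd : (d : A) * ↑d⁻¹ = 1 := d.mul_inv
  have hwe : z 0 = Units.map (algebraMap A K : A →* K) (v * e⁻¹) *
      Units.map (algebraMap A K : A →* K) e := by
    ext; simp [hz0]
  have hz' : ∀ a, ∀ j ≠ i, j ≠ 0 → update z 0 a j ∈ unitGroup A K :=
    fun a j hji hj0 => by rw [update_of_ne hj0]; exact hz j hji hj0
  have hzi' : ∀ a, (update z 0 a i : K) = algebraMap A K t := fun a => by
    rw [update_of_ne hi, hzi]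
  rw [← update_eq_self 0 z, hwe, symbol_update_mul]
  refine add_mem
    (symbol_mem_UmKM'_of_eq_one_sub_mul hi (hz' _) (v := v * e⁻¹) (c := e * d⁻¹) ?_ (by simp) ?_)
    (symbol_mem_UmKM'_of_eq_one_sub_mul hi (hz' _) (v := e) (c := -1) ?_ (by simp) ?_)
  · have hw : ((v * e⁻¹ : Aˣ) : A) - 1 = t * ((ϖ - 1) * (e⁻¹ : Aˣ)) := by
      rw [Units.val_mul]
      linear_combination (↑e⁻¹ : A) * hv - (↑e⁻¹ : A) * he.unit_spec + hee
    rw [hw]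
    exact Ideal.mul_mem_right _ _ ht
  · rw [hzi']
    congr 1
    simp only [Units.val_mul]
    linear_combination (v * ↑d⁻¹ : A) * hee + (↑d⁻¹ : A) * hv - (↑d⁻¹ : A) * he.unit_spec
      + (t * ↑d⁻¹ : A) * hd.unit_spec - t * hdd
  · simpa [e] using ht
  · rw [hzi']
    simp [e]

variable [IsFractionRing A K]

theorem closure_insert_unitGroup_eq_top {ϖ : A} (hϖ : Irreducible ϖ) {p : Kˣ}
    (hp : (p : K) = algebraMap A K ϖ) :
    Subgroup.closure (insert p (unitGroup A K : Set Kˣ)) = ⊤ := by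
  refine eq_top_iff.2 fun y _ => ?_
  obtain ⟨k, c, hy⟩ :=
    IsDiscreteValuationRing.exists_units_eq_smul_zpow_of_irreducible hϖ y.ne_zero
  have hy' : y = Units.map (algebraMap A K : A →* K) c * p ^ k :=
    Units.ext (by simp [hy, hp, Units.smul_def, Algebra.smul_def])
  rw [hy']
  exact mul_mem (Subgroup.subset_closure (Set.mem_insert_of_mem _ ⟨c, rfl⟩))
    (zpow_mem (Subgroup.subset_closure (Set.mem_insert _ _)) k)

/-- With `v = 1 + ϖ t`, the Steinberg relation `{v, -ϖ t} = 0` gives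
`{v, ϖ} = -{v, -1} - {v, t}`. -/
theorem symbol_mem_UmKM'_of_eq_uniformizer_of_units {z : Fin (n + 1) → Kˣ} {i : Fin (n + 1)}
    (hi : i ≠ 0) (hz : ∀ j ≠ i, j ≠ 0 → z j ∈ unitGroup A K) {ϖ : A} (hϖ : Irreducible ϖ)
    {v : Aˣ} (hv : (v : A) - 1 ∈ maximalIdeal A ^ (m + 1)) (hz0 : (z 0 : K) = algebraMap A K v)
    (hzi : (z i : K) = algebraMap A K ϖ) :
    symbol z ∈ UmKM' A K m n := by
  obtain ⟨t, ht, hvt⟩ := exists_eq_mul_of_mem_maximalIdeal_pow_succ hϖ hv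
  by_cases ht0 : t = 0
  · have hv1 : (v : A) = 1 := by rw [← sub_eq_zero, hvt, ht0, mul_zero]
    rw [symbol_eq_zero_of_eq_one z (i := 0) (Units.ext (by simp [hz0, hv1]))]
    exact zero_mem _
  have hT : algebraMap A K t ≠ 0 := mt IsFractionRing.to_map_eq_zero_iff.1 ht0
  have hz' : ∀ b, ∀ j ≠ i, j ≠ 0 → update z i b j ∈ unitGroup A K :=
    fun b j hji hj0 => by rw [update_of_ne hji]; exact hz j hji hj0
  have hsplit : z i = z i * Units.mk0 _ hT * (Units.mk0 _ hT)⁻¹ := by group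
  rw [← update_eq_self i z, hsplit, symbol_update_mul, symbol_update_inv, ← sub_eq_add_neg]
  refine sub_mem (symbol_mem_UmKM'_of_eq_one_sub_mul hi (hz' _) (v := v) (c := -1)
    (Ideal.pow_le_pow_right m.le_succ hv) (by simp [update_of_ne hi.symm, hz0]) ?_)
    (symbol_mem_UmKM'_of_eq_one_add_uniformizer_mul hi (hz' _) hϖ ht
      (sub_eq_iff_eq_add'.1 hvt) (by simp [update_of_ne hi.symm, hz0]) (by simp))
  simp only [update_self, Units.val_mul, Units.val_mk0, hzi, ← map_mul, Units.val_neg,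
    Units.val_one]
  congr 1
  linear_combination -hvt

theorem symbol_mem_UmKM'_of_eq_uniformizer {z : Fin (n + 1) → Kˣ} {i : Fin (n + 1)}
    (hi : i ≠ 0) {ϖ : A} (hϖ : Irreducible ϖ) {p : Kˣ} (hp : (p : K) = algebraMap A K ϖ)
    (hzi : z i = p) {v : Aˣ} (hv : (v : A) - 1 ∈ maximalIdeal A ^ (m + 1))
    (hz0 : (z 0 : K) = algebraMap A K v) :
    symbol z ∈ UmKM' A K m n := by
  have hp' : ((-p : Kˣ) : K) = algebraMap A K (-ϖ) := by simp [hp]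
  refine symbol_mem_of_forall_mem_closure _
    (closure_insert_unitGroup_eq_top ((Associated.refl ϖ).neg_right.irreducible hϖ) hp')
    ((Finset.univ.erase 0).erase i) z fun y hyz hyT => ?_
  have hy0 : y 0 = z 0 := hyz 0 (by simp)
  have hyi : y i = p := (hyz i (by simp)).trans hzi
  by_cases hneg : ∃ j ≠ i, j ≠ 0 ∧ y j = -p
  · obtain ⟨j, hji, -, hyj⟩ := hneg
    rw [symbol_eq_zero_of_eq_neg y hji.symm (by rw [hyj, hyi, Units.val_neg])]
    exact zero_mem _
  push Not at hneg
  refine symbol_mem_UmKM'_of_eq_uniformizer_of_units hi (fun j hji hj0 => ?_) hϖ hv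
    (by rw [hy0, hz0]) (by rw [hyi, hp])
  exact (Set.mem_insert_iff.1 (hyT j (by simp [hji, hj0]))).resolve_left (hneg j hji hj0)

theorem symbol_mem_UmKM'_of_mem_Um_succ (x : Fin (n + 1) → Kˣ) (hx : x 0 ∈ Um A K (m + 1)) :
    symbol x ∈ UmKM' A K m n := by
  obtain ⟨ϖ, hϖ⟩ := IsDiscreteValuationRing.exists_irreducible A
  have hϖ0 : algebraMap A K ϖ ≠ 0 := mt IsFractionRing.to_map_eq_zero_iff.1 hϖ.ne_zero
  rw [← update_eq_self 0 x]
  refine symbol_update_mem_of_mem_closure _ x 0 (fun u hu => ?_) hx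
  obtain ⟨v, hvu, hv⟩ := hu
  refine symbol_mem_of_forall_mem_closure _ (closure_insert_unitGroup_eq_top hϖ
    (p := Units.mk0 _ hϖ0) rfl) (Finset.univ.erase 0) _ fun y hyx hyT => ?_
  have hy0 : (y 0 : K) = algebraMap A K v := by rw [hyx 0 (by simp), update_self, hvu]
  by_cases hϖy : ∃ i ≠ 0, y i = Units.mk0 _ hϖ0
  · obtain ⟨i, hi, hyi⟩ := hϖy
    exact symbol_mem_UmKM'_of_eq_uniformizer hi hϖ rfl hyi hv hy0
  push Not at hϖy
  refine symbol_mem_UmKM' (mem_Um_of_eq v hy0.symm (Ideal.pow_le_pow_right m.le_succ hv))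
    fun j hj0 => ?_
  exact (Set.mem_insert_iff.1 (hyT j (by simp [hj0]))).resolve_left (hϖy j hj0)

end UnitFiltration

theorem milnorK_unit_filtration_inclusions_general
    (A : Type*) [CommRing A] [IsDomain A] [IsDiscreteValuationRing A]
    (K : Type*) [Field K] [Algebra A K] [IsFractionRing A K]
    (m n : ℕ) :
    UmKM A K (m + 1) n ≤ UmKM' A K m n ∧ UmKM' A K m n ≤ UmKM A K m n := by
  constructor
  · refine (AddSubgroup.closure_le _).2 ?_
    rintro _ ⟨x, hx, rfl⟩
    exact symbol_mem_UmKM'_of_mem_Um_succ x hx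
  · refine AddSubgroup.closure_mono ?_
    rintro _ ⟨x, hx, -, rfl⟩
    exact ⟨x, hx, rfl⟩

/-- Let `K` be a Henselian discrete valuation field and `m ≥ 0`,
`n ≥ 1` integers.  Then there are inclusions of subgroups of the Milnor K-group:
`U_{m+1} K^M_n(K) ⊆ U'_m K^M_n(K) ⊆ U_m K^M_n(K)`. -/
theorem milnorK_unit_filtration_inclusions
    (A : Type*) [CommRing A] [IsDomain A] [IsDiscreteValuationRing A]
    [HenselianLocalRing A]
    (K : Type*) [Field K] [Algebra A K] [IsFractionRing A K]
    (m n : ℕ) :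
    UmKM A K (m + 1) n ≤ UmKM' A K m n ∧ UmKM' A K m n ≤ UmKM A K m n :=
  milnorK_unit_filtration_inclusions_general A K m n
end

section
/- Let K be a discrete valuation field with valuation ring O_K and uniformizer π, and let m ≥ 0. Then for any unit u ∈ O_K^×, the symbol {1 + uπ^{m+1}, π} in K^M_2(K) lies in the subgroup U'_m K^M_2(K) generated by symbols {a, v} with a ∈ 1 + 𝔪_K^m and v ∈ O_K^×. -/
/-!
Since `w = 1 + uπ^{m+1}` and `-uπ^{m+1}` sum to `1`, the Steinberg relation gives
`(m+1)•{w, π} = -{w, -u} ∈ U'_m`. It therefore suffices to show `m•{w, π} ∈ U'_m`. For `m ≥ 1`,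
`1 + uπ^{m+1} = (1 + aπ^m)(1 + bπ^m)` with units `b = u(1+π)` and `a = -u/(1 + bπ^m)`, and the
same Steinberg argument applied to each factor `1 + cπ^m` puts `m•{1 + cπ^m, π}` in `U'_m`.
-/

open Function IsLocalRing

theorem update_pair_zero {α : Type*} (a b y : α) : update ![a, b] 0 y = ![y, b] := by
  ext i; fin_cases i <;> rfl

theorem update_pair_one {α : Type*} (a b y : α) : update ![a, b] 1 y = ![a, y] := by
  ext i; fin_cases i <;> rfl

namespace MilnorK

variable {K : Type*} [Field K] {n : ℕ}

theorem symbol_update_pow (x : Fin n → Kˣ) (i : Fin n) (a : Kˣ) (k : ℕ) :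
    symbol (update x i (a ^ k)) = k • symbol (update x i a) := by
  induction k with
  | zero => simpa using symbol_update_one x i
  | succ k ih => rw [pow_succ, symbol_update_mul, ih, succ_nsmul]

theorem symbol_mul_left (a b c : Kˣ) :
    symbol ![a * b, c] = symbol ![a, c] + symbol ![b, c] := by
  simpa only [update_pair_zero] using symbol_update_mul ![a, c] 0 a b

theorem symbol_mul_right (a b c : Kˣ) :
    symbol ![a, b * c] = symbol ![a, b] + symbol ![a, c] := by
  simpa only [update_pair_one] using symbol_update_mul ![a, b] 1 b c

theorem symbol_pow_right (a b : Kˣ) (k : ℕ) : symbol ![a, b ^ k] = k • symbol ![a, b] := by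
  simpa only [update_pair_one] using symbol_update_pow ![a, b] 1 b k

theorem nsmul_symbol_eq_neg_of_add_mul_pow_eq_one {a b p : Kˣ} {k : ℕ}
    (h : (a : K) + b * p ^ k = 1) : k • symbol ![a, p] = -symbol ![a, b] := by
  have hst : symbol ![a, b * p ^ k] = 0 :=
    symbol_eq_zero_of_add_eq_one ![a, b * p ^ k] (i := 0) (j := 1) (by decide) (by simpa using h)
  rw [symbol_mul_right, symbol_pow_right] at hst
  exact eq_neg_of_add_eq_zero_right hst

end MilnorK

theorem IsLocalRing.isUnit_one_add_of_mem_maximalIdeal {R : Type*} [CommRing R] [IsLocalRing R]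
    {x : R} (hx : x ∈ maximalIdeal R) : IsUnit (1 + x) := by
  simpa using isUnit_one_sub_self_of_mem_nonunits (-x) (neg_mem hx)

theorem IsLocalRing.exists_units_val_eq_one_add_algebraMap {R B : Type*} [CommRing R]
    [IsLocalRing R] [Semiring B] [Algebra R B] {x : R} (hx : x ∈ maximalIdeal R) :
    ∃ w : Bˣ, (w : B) = 1 + algebraMap R B x :=
  ⟨Units.map (algebraMap R B : R →* B) (isUnit_one_add_of_mem_maximalIdeal hx).unit, by simp⟩

theorem IsLocalRing.exists_units_one_add_mul_pow_mul_one_add_mul_pow {R : Type*} [CommRing R]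
    [IsLocalRing R] {π : R} (hπ : π ∈ maximalIdeal R) (u : Rˣ) (n : ℕ) :
    ∃ a b : Rˣ, (1 + a * π ^ (n + 1)) * (1 + b * π ^ (n + 1)) = 1 + u * π ^ (n + 2) := by
  have hπ1 : IsUnit (1 + π) := isUnit_one_add_of_mem_maximalIdeal hπ
  have hs : IsUnit (1 + u * (1 + π) * π ^ (n + 1)) :=
    isUnit_one_add_of_mem_maximalIdeal
      (Ideal.mul_mem_left _ _ (Ideal.pow_mem_of_mem _ hπ _ n.succ_pos))
  refine ⟨-u * hs.unit⁻¹, u * hπ1.unit, ?_⟩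
  have hinv := hs.mul_val_inv
  push_cast [hs.unit_spec, hπ1.unit_spec] at hinv ⊢
  linear_combination (-(u : R) * π ^ (n + 1)) * hinv

section DVR

variable {A : Type*} [CommRing A] [IsDomain A] [IsDiscreteValuationRing A]
  {K : Type*} [Field K] [Algebra A K]

variable (A K) in
theorem Um_antitone : Antitone (Um A K) := fun _ _ hmn =>
  Subgroup.closure_mono fun _ ⟨v, hv, hv1⟩ => ⟨v, hv, Ideal.pow_le_pow_right hmn hv1⟩

variable (A K) in
theorem UmKM'_antitone (n : ℕ) : Antitone fun m => UmKM' A K m n := fun _ _ hmn =>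
  AddSubgroup.closure_mono fun _ ⟨x, hx0, hx, hz⟩ => ⟨x, Um_antitone A K hmn hx0, hx, hz⟩

theorem mem_Um_of_val_eq_one_add {m : ℕ} {x : A} (hx : x ∈ maximalIdeal A ^ (m + 1)) {w : Kˣ}
    (hw : (w : K) = 1 + algebraMap A K x) : w ∈ Um A K (m + 1) := by
  have hunit := isUnit_one_add_of_mem_maximalIdeal (Ideal.pow_le_self m.succ_ne_zero hx)
  exact Subgroup.subset_closure ⟨hunit.unit, by simp [hw], by simpa using hx⟩

theorem symbol_mem_UmKM'_s5 {m : ℕ} {a c : Kˣ} (ha : a ∈ Um A K m) (hc : c ∈ unitGroup A K) :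
    MilnorK.symbol ![a, c] ∈ UmKM' A K m 1 := by
  refine AddSubgroup.subset_closure ⟨![a, c], ha, fun i hi => ?_, rfl⟩
  fin_cases i
  · exact absurd rfl hi
  · exact hc

theorem succ_nsmul_symbol_mem_UmKM' {π : A} (hπ : π ∈ maximalIdeal A) (v : Aˣ) (n : ℕ)
    {w p : Kˣ} (hw : (w : K) = 1 + algebraMap A K (v * π ^ (n + 1)))
    (hp : (p : K) = algebraMap A K π) :
    (n + 1) • MilnorK.symbol ![w, p] ∈ UmKM' A K (n + 1) 1 := by
  have hsum : (w : K) + (Units.map (algebraMap A K : A →* K) (-v) : K) * p ^ (n + 1) = 1 := by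
    simp [hw, hp]
  rw [MilnorK.nsmul_symbol_eq_neg_of_add_mul_pow_eq_one hsum]
  refine neg_mem (symbol_mem_UmKM'_s5 (mem_Um_of_val_eq_one_add ?_ hw) ⟨-v, rfl⟩)
  exact Ideal.mul_mem_left _ _ (Ideal.pow_mem_pow hπ _)

theorem nsmul_symbol_mem_UmKM' {π : A} (hπ : π ∈ maximalIdeal A) (u : Aˣ) (m : ℕ)
    {w p : Kˣ} (hw : (w : K) = 1 + algebraMap A K (u * π ^ (m + 1)))
    (hp : (p : K) = algebraMap A K π) :
    m • MilnorK.symbol ![w, p] ∈ UmKM' A K m 1 := by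
  cases m with
  | zero => simp
  | succ n =>
    obtain ⟨a, b, hab⟩ := exists_units_one_add_mul_pow_mul_one_add_mul_pow hπ u n
    have hπn : π ^ (n + 1) ∈ maximalIdeal A := Ideal.pow_mem_of_mem _ hπ _ n.succ_pos
    obtain ⟨w₁, hw₁⟩ := exists_units_val_eq_one_add_algebraMap (B := K)
      (Ideal.mul_mem_left _ (a : A) hπn)
    obtain ⟨w₂, hw₂⟩ := exists_units_val_eq_one_add_algebraMap (B := K)
      (Ideal.mul_mem_left _ (b : A) hπn)
    have hw_eq : w = w₁ * w₂ := Units.ext <| by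
      simpa [hw, hw₁, hw₂] using (congrArg (algebraMap A K) hab).symm
    rw [hw_eq, MilnorK.symbol_mul_left, nsmul_add]
    exact add_mem (succ_nsmul_symbol_mem_UmKM' hπ a n hw₁ hp)
      (succ_nsmul_symbol_mem_UmKM' hπ b n hw₂ hp)

end DVR

theorem milnorK_symbol_one_add_unit_pi_pow_mem_general
    (A : Type*) [CommRing A] [IsDomain A] [IsDiscreteValuationRing A]
    (K : Type*) [Field K] [Algebra A K]
    (m : ℕ) (u : Aˣ) (π : A) (hπ : Irreducible π)
    (w : Kˣ) (hw : (w : K) = 1 + algebraMap A K ((u : A) * π ^ (m + 1)))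
    (p : Kˣ) (hp : (p : K) = algebraMap A K π) :
    MilnorK.symbol ![w, p] ∈ UmKM' A K m 1 := by
  have hπm : π ∈ maximalIdeal A := hπ.not_isUnit
  have h_succ : (m + 1) • MilnorK.symbol ![w, p] ∈ UmKM' A K m 1 :=
    UmKM'_antitone A K 1 m.le_succ (succ_nsmul_symbol_mem_UmKM' hπm u m hw hp)
  have h_self : m • MilnorK.symbol ![w, p] ∈ UmKM' A K m 1 := nsmul_symbol_mem_UmKM' hπm u m hw hp
  simpa [succ_nsmul] using sub_mem h_succ h_self

/-- Let `K` be a discrete valuation field with valuation ring `O_K` and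
uniformizer `π`, and let `m ≥ 0`.  Then for any unit `u ∈ O_K^×`, the symbol
`{1 + u π^{m+1}, π}` in `K^M_2(K)` lies in the subgroup `U'_m K^M_2(K)` generated by the
symbols `{a, v}` with `a ∈ 1 + 𝔪_K^m` and `v ∈ O_K^×`. -/
theorem milnorK_symbol_one_add_unit_pi_pow_mem
    (A : Type*) [CommRing A] [IsDomain A] [IsDiscreteValuationRing A]
    (K : Type*) [Field K] [Algebra A K] [IsFractionRing A K]
    (m : ℕ) (u : Aˣ) (π : A) (hπ : Irreducible π)
    (w : Kˣ) (hw : (w : K) = 1 + algebraMap A K ((u : A) * π ^ (m + 1)))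
    (p : Kˣ) (hp : (p : K) = algebraMap A K π) :
    MilnorK.symbol ![w, p] ∈ UmKM' A K m 1 :=
  milnorK_symbol_one_add_unit_pi_pow_mem_general A K m u π hπ w hw p hp
end

section
/- Let 0 → G' → G → G'' → 0 be a short exact sequence of topological abelian groups, each of which is either profinite or discrete, with continuous open maps. Then the sequence of Pontryagin duals 0 → (G'')^∨ → G^∨ → (G')^∨ → 0 is exact, where A^∨ = Hom_cont(A, ℚ/ℤ). -/
/-- The discrete group `ℚ/ℤ`. -/
def QZ : Type := ℚ ⧸ AddSubgroup.zmultiples (1 : ℚ)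

noncomputable instance : AddCommGroup QZ :=
  inferInstanceAs (AddCommGroup (ℚ ⧸ AddSubgroup.zmultiples (1 : ℚ)))

instance : TopologicalSpace QZ := ⊥

instance : DiscreteTopology QZ := ⟨rfl⟩

/-- A topological abelian group that is either profinite or discrete. -/
def ProfiniteOrDiscrete (G : Type*) [TopologicalSpace G] : Prop :=
  (CompactSpace G ∧ TotallyDisconnectedSpace G ∧ T2Space G) ∨ DiscreteTopology G

/-!
Since `f` is open, `G'` is identified with an open subgroup of `G`. As `ℚ/ℤ` is divisible, hence
an injective abelian group, every character of `G'` extends algebraically to `G`, and the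
extension is automatically continuous: its kernel contains the open subgroup `f (ker χ')`.
Dually, a character of `G` killing `ker g` descends along the open surjection `g`, and the
descended character is continuous because `g` maps open sets onto open sets.
-/

noncomputable instance : DivisibleBy QZ ℤ :=
  inferInstanceAs (DivisibleBy (ℚ ⧸ AddSubgroup.zmultiples (1 : ℚ)) ℤ)

theorem IsOpenMap.continuous_of_continuous_comp {X Y Z : Type*} [TopologicalSpace X]
    [TopologicalSpace Y] [TopologicalSpace Z] {g : X → Y} {h : Y → Z} (hg : IsOpenMap g)
    (hsurj : Function.Surjective g) (hc : Continuous (h ∘ g)) : Continuous h := by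
  refine continuous_def.2 fun s hs => ?_
  rw [← Set.image_preimage_eq (h ⁻¹' s) hsurj]
  exact hg _ (hc.isOpen_preimage s hs)

namespace AddMonoidHom

variable {G' G G'' D : Type*} [AddCommGroup G'] [AddCommGroup G] [AddCommGroup G'']
  [AddCommGroup D] [TopologicalSpace G] [TopologicalSpace G''] [TopologicalSpace D]

theorem continuous_of_isOpen_ker [DiscreteTopology D] [IsTopologicalAddGroup G] (χ : G →+ D)
    (h : IsOpen (χ.ker : Set G)) : Continuous χ :=
  continuous_of_continuousAt_zero χ <| by
    rw [ContinuousAt, nhds_discrete D, map_zero, Filter.tendsto_pure]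
    exact h.mem_nhds χ.ker.zero_mem

theorem exists_continuous_comp_eq_iff_comp_eq_zero {f : G' →+ G} {g : G →+ G''}
    (hgo : IsOpenMap g) (hgsurj : Function.Surjective g) (hexact : f.range = g.ker)
    {χ : G →+ D} (hχ : Continuous χ) :
    (∃ χ'' : G'' →+ D, Continuous χ'' ∧ χ''.comp g = χ) ↔ χ.comp f = 0 := by
  rw [← range_le_ker_iff, hexact]
  constructor
  · rintro ⟨χ'', -, rfl⟩ x (hx : g x = 0)
    simp [mem_ker, hx]
  · intro hker
    let χ'' := g.liftOfRightInverse _ (Function.rightInverse_surjInv hgsurj) ⟨χ, hker⟩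
    have hcomp : χ''.comp g = χ := g.liftOfRightInverse_comp _ _ ⟨χ, hker⟩
    refine ⟨χ'', hgo.continuous_of_continuous_comp hgsurj ?_, hcomp⟩
    rwa [← coe_comp, hcomp]

theorem exists_continuous_comp_eq_of_isOpenMap [TopologicalSpace G'] [DiscreteTopology D]
    [IsTopologicalAddGroup G] [DivisibleBy D ℤ]
    {f : G' →+ G} (hfo : IsOpenMap f) (hfinj : Function.Injective f) {χ' : G' →+ D}
    (hχ' : Continuous χ') : ∃ χ : G →+ D, Continuous χ ∧ χ.comp f = χ' := by
  obtain ⟨χ, hχ⟩ := (Module.Baer.of_divisible D).extension_property_addMonoidHom f hfinj χ'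
  have hker : χ'.ker.map f ≤ χ.ker := by
    rw [AddSubgroup.map_le_iff_le_comap, comap_ker, hχ]
  have hopen : IsOpen (χ'.ker.map f : Set G) :=
    hfo _ ((isOpen_discrete {0}).preimage hχ')
  exact ⟨χ, χ.continuous_of_isOpen_ker (AddSubgroup.isOpen_mono hker hopen), hχ⟩

end AddMonoidHom

theorem pontryagin_dual_short_exact_general
    {G' G G'' : Type*}
    [AddCommGroup G'] [AddCommGroup G] [AddCommGroup G'']
    [TopologicalSpace G'] [TopologicalSpace G] [TopologicalSpace G'']
    [IsTopologicalAddGroup G]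
    (f : G' →+ G) (g : G →+ G'')
    (hfo : IsOpenMap f) (hgo : IsOpenMap g)
    (hfinj : Function.Injective f) (hgsurj : Function.Surjective g)
    (hexact : f.range = g.ker) :
    (∀ χ'' : G'' →+ QZ, Continuous χ'' → χ''.comp g = 0 → χ'' = 0) ∧
    (∀ χ : G →+ QZ, Continuous χ →
      (χ.comp f = 0 ↔ ∃ χ'' : G'' →+ QZ, Continuous χ'' ∧ χ''.comp g = χ)) ∧
    (∀ χ' : G' →+ QZ, Continuous χ' →
      ∃ χ : G →+ QZ, Continuous χ ∧ χ.comp f = χ') := by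
  refine ⟨fun χ'' _ h => ?_, fun χ hχ => ?_, fun χ' hχ' => ?_⟩
  · exact (AddMonoidHom.cancel_right hgsurj).1 (by rw [h, AddMonoidHom.zero_comp])
  · exact (AddMonoidHom.exists_continuous_comp_eq_iff_comp_eq_zero hgo hgsurj hexact hχ).symm
  · exact AddMonoidHom.exists_continuous_comp_eq_of_isOpenMap hfo hfinj hχ'

/-- Let `0 → G' → G → G'' → 0` be a short exact sequence of topological
abelian groups, each of which is either profinite or discrete, with continuous open maps.
Then the sequence of Pontryagin duals `0 → (G'')^∨ → G^∨ → (G')^∨ → 0` is exact, where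
`A^∨ = Hom_cont(A, ℚ/ℤ)`:
(i) precomposition with `g` is injective on continuous characters;
(ii) a continuous character of `G` vanishes on the image of `f` iff it factors through a
continuous character of `G''`;
(iii) every continuous character of `G'` extends to a continuous character of `G`. -/
theorem pontryagin_dual_short_exact
    {G' G G'' : Type*}
    [AddCommGroup G'] [AddCommGroup G] [AddCommGroup G'']
    [TopologicalSpace G'] [TopologicalSpace G] [TopologicalSpace G'']
    [IsTopologicalAddGroup G'] [IsTopologicalAddGroup G] [IsTopologicalAddGroup G'']
    (hG' : ProfiniteOrDiscrete G') (hG : ProfiniteOrDiscrete G)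
    (hG'' : ProfiniteOrDiscrete G'')
    (f : G' →+ G) (g : G →+ G'')
    (hfc : Continuous f) (hgc : Continuous g)
    (hfo : IsOpenMap f) (hgo : IsOpenMap g)
    (hfinj : Function.Injective f) (hgsurj : Function.Surjective g)
    (hexact : f.range = g.ker) :
    (∀ χ'' : G'' →+ QZ, Continuous χ'' → χ''.comp g = 0 → χ'' = 0) ∧
    (∀ χ : G →+ QZ, Continuous χ →
      (χ.comp f = 0 ↔ ∃ χ'' : G'' →+ QZ, Continuous χ'' ∧ χ''.comp g = χ)) ∧
    (∀ χ' : G' →+ QZ, Continuous χ' →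
      ∃ χ : G →+ QZ, Continuous χ ∧ χ.comp f = χ') :=
  pontryagin_dual_short_exact_general f g hfo hgo hfinj hgsurj hexact
end

section
/- Let G be a topological abelian group that is either profinite or discrete. Then the evaluation map ev_G : G → (G^∨)^∨, sending g to the character χ ↦ χ(g), is injective. -/
theorem QZ.exists_addMonoidHom_apply_ne_zero {A : Type*} [AddCommGroup A] {a : A}
    (ha : a ≠ 0) : ∃ χ : A →+ QZ, χ a ≠ 0 :=
  -- `CharacterModule A` is `A →+ AddCircle (1 : ℚ)`, and `AddCircle (1 : ℚ)` unfolds to `QZ`.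
  have ⟨χ, hχ⟩ := CharacterModule.exists_character_apply_ne_zero_of_ne_zero ha
  ⟨(χ : A →+ AddCircle (1 : ℚ)), hχ⟩

section

variable {G : Type*} [AddCommGroup G] [TopologicalSpace G]

theorem injective_eval_of_exists_continuous_apply_ne_zero
    (h : ∀ g : G, g ≠ 0 → ∃ χ : G →+ QZ, Continuous χ ∧ χ g ≠ 0) :
    Function.Injective
      (fun (g : G) => fun (χ : {χ : G →+ QZ // Continuous χ}) => (χ : G →+ QZ) g) := by
  intro a b hab
  by_contra hne
  obtain ⟨χ, hχ, hχab⟩ := h (a - b) (sub_ne_zero.mpr hne)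
  exact hχab (by simpa [sub_eq_zero] using congrFun hab ⟨χ, hχ⟩)

theorem QZ.exists_continuous_apply_ne_zero_of_notMem [IsTopologicalAddGroup G]
    (U : OpenAddSubgroup G) {g : G} (hg : g ∉ U) :
    ∃ χ : G →+ QZ, Continuous χ ∧ χ g ≠ 0 := by
  have : DiscreteTopology (G ⧸ (U : AddSubgroup G)) := QuotientAddGroup.discreteTopology U.isOpen
  have hg' : (QuotientAddGroup.mk g : G ⧸ (U : AddSubgroup G)) ≠ 0 := by
    rwa [ne_eq, QuotientAddGroup.eq_zero_iff]
  obtain ⟨χ, hχ⟩ := QZ.exists_addMonoidHom_apply_ne_zero hg'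
  exact ⟨χ.comp (QuotientAddGroup.mk' (U : AddSubgroup G)),
    (continuous_of_discreteTopology (f := χ)).comp continuous_quotient_mk', hχ⟩

theorem exists_openAddSubgroup_notMem_of_discrete [DiscreteTopology G] {g : G} (hg : g ≠ 0) :
    ∃ U : OpenAddSubgroup G, g ∉ U :=
  ⟨⟨⊥, isOpen_discrete _⟩, hg⟩

theorem exists_openAddSubgroup_notMem_of_compact_totallyDisconnected [IsTopologicalAddGroup G]
    [CompactSpace G] [TotallyDisconnectedSpace G] {g : G} (hg : g ≠ 0) :
    ∃ U : OpenAddSubgroup G, g ∉ U := by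
  obtain ⟨U, hU⟩ := ProfiniteGrp.exist_openNormalAddSubgroup_sub_open_nhds_of_zero
    isClosed_singleton.isOpen_compl (Set.mem_compl_singleton_iff.mpr hg.symm)
  exact ⟨U.toOpenAddSubgroup, fun hgU => hU hgU rfl⟩

end

theorem evaluation_map_injective_profinite_or_discrete_general
    (G : Type*) [AddCommGroup G] [TopologicalSpace G] [IsTopologicalAddGroup G]
    (hG : (CompactSpace G ∧ TotallyDisconnectedSpace G) ∨ DiscreteTopology G) :
    Function.Injective
      (fun (g : G) => fun (χ : {χ : G →+ QZ // Continuous χ}) => (χ : G →+ QZ) g) := by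
  refine injective_eval_of_exists_continuous_apply_ne_zero fun g hg => ?_
  obtain ⟨U, hgU⟩ : ∃ U : OpenAddSubgroup G, g ∉ U := by
    rcases hG with ⟨_, _⟩ | _
    · exact exists_openAddSubgroup_notMem_of_compact_totallyDisconnected hg
    · exact exists_openAddSubgroup_notMem_of_discrete hg
  exact QZ.exists_continuous_apply_ne_zero_of_notMem U hgU

/-- Let `G` be a topological abelian group that is either profinite or
discrete.  Then the evaluation map `ev_G : G → (G^∨)^∨`, sending `g` to the character
`χ ↦ χ(g)` on the group `G^∨` of continuous characters `G → ℚ/ℤ`, is injective; i.e. if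
every continuous character kills `g`, then `g = 0`. -/
theorem evaluation_map_injective_profinite_or_discrete
    (G : Type*) [AddCommGroup G] [TopologicalSpace G] [IsTopologicalAddGroup G] [T2Space G]
    (hG : (CompactSpace G ∧ TotallyDisconnectedSpace G) ∨ DiscreteTopology G) :
    Function.Injective
      (fun (g : G) => fun (χ : {χ : G →+ QZ // Continuous χ}) => (χ : G →+ QZ) g) :=
  evaluation_map_injective_profinite_or_discrete_general G hG
end
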